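/- arXiv:1801.09613 — 6 statements merged into one kernel-verified Lean document; each statement's English description precedes it below -/
import Mathlib

section
/- Conservation of angular momentum in the Euler two-center problem: if I ⊆ ℝ is an open interval and q, p : I → ℝ³ are differentiable functions such that for every t ∈ I one has q(t) ∉ {o₁, o₂}, q'(t) = p(t), and p'(t) = −∇V(q(t)), then the function t ↦ L_z(q(t), p(t)) is constant on I. -/
noncomputable section

open Real Filter Topology
open scoped RealInnerProductSpace

/-- Euclidean 3-space. -/
abbrev R3 : Type := EuclideanSpace ℝ (Fin 3)

/-- The vector `(x, y, z)` in `R3`. -/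
def vec3 (x y z : ℝ) : R3 := (WithLp.equiv 2 (Fin 3 → ℝ)).symm ![x, y, z]

/-- The first center `o₁ = (0,0,-a)`. -/
def ctr1 (a : ℝ) : R3 := vec3 0 0 (-a)

/-- The second center `o₂ = (0,0,a)`. -/
def ctr2 (a : ℝ) : R3 := vec3 0 0 a

/-- The Euler two-center potential `V(q) = -μ₁/r₁(q) - μ₂/r₂(q)`. -/
def eulerV (a μ1 μ2 : ℝ) (q : R3) : ℝ := -μ1 / ‖q - ctr1 a‖ - μ2 / ‖q - ctr2 a‖

/-- The angular momentum `L_z(q,p) = x p_y - y p_x`. -/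
def angMom (q p : R3) : ℝ := q 0 * p 1 - q 1 * p 0

/-- The cross product `q × p` in `R3`. -/
def cross3 (q p : R3) : R3 :=
  vec3 (q 1 * p 2 - q 2 * p 1) (q 2 * p 0 - q 0 * p 2) (q 0 * p 1 - q 1 * p 0)

/-- The Euler Hamiltonian `H(q,p) = ‖p‖²/2 + V(q)`. -/
def eulerH (a μ1 μ2 : ℝ) (q p : R3) : ℝ := ‖p‖ ^ 2 / 2 + eulerV a μ1 μ2 q

/-- The separation constant
`G(q,p) = H + (‖q×p‖² - a²(pₓ²+p_y²))/2 + a(z+a)μ₁/r₁ - a(z-a)μ₂/r₂`. -/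
def eulerG (a μ1 μ2 : ℝ) (q p : R3) : ℝ :=
  eulerH a μ1 μ2 q p + (‖cross3 q p‖ ^ 2 - a ^ 2 * ((p 0) ^ 2 + (p 1) ^ 2)) / 2
    + a * (q 2 + a) * μ1 / ‖q - ctr1 a‖ - a * (q 2 - a) * μ2 / ‖q - ctr2 a‖

/-
Proof idea: `∇V(q) = (μ₁/r₁³)(q - o₁) + (μ₂/r₂³)(q - o₂)`, and since `o₁, o₂` lie on the `z`-axis,
`L_z(q, ∇V(q)) = 0`. Along a solution `d/dt L_z(q, p) = L_z(p, p) - L_z(q, ∇V(q)) = 0`, so `L_z`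
is constant on the interval by the mean value theorem.
-/

section Newton

variable {E : Type*} [NormedAddCommGroup E] [InnerProductSpace ℝ E] [CompleteSpace E]

theorem hasGradientAt_neg_div_norm_sub (μ : ℝ) {c x : E} (hx : x ≠ c) :
    HasGradientAt (fun y => -μ / ‖y - c‖) ((μ / ‖x - c‖ ^ 3) • (x - c)) x := by
  set r := ‖x - c‖
  have hr : 0 < r := norm_pos_iff.2 (sub_ne_zero.2 hx)
  have hsqrt : √(r ^ 2) = r := Real.sqrt_sq hr.le
  have hφ : HasDerivAt (fun s => -μ / √s) (μ / (2 * r ^ 3)) (r ^ 2) := by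
    have := ((Real.hasDerivAt_sqrt (x := r ^ 2) (by positivity)).inv
      (by rw [hsqrt]; exact hr.ne')).const_mul (-μ)
    simp only [hsqrt, Pi.inv_apply, ← div_eq_mul_inv] at this
    exact this.congr_deriv (by field_simp)
  have hcomp : (fun y => -μ / ‖y - c‖) = (fun s => -μ / √s) ∘ (fun y => ‖y - c‖ ^ 2) := by
    funext y; simp [Real.sqrt_sq (norm_nonneg _)]
  rw [hasGradientAt_iff_hasFDerivAt, hcomp]
  refine (hφ.comp_hasFDerivAt x ((hasFDerivAt_id x).sub_const c).norm_sq).congr_fderiv ?_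
  ext v
  simp only [id_eq, map_sub, ContinuousLinearMap.comp_id, smul_apply,
    sub_apply, coe_innerSL_apply, nsmul_eq_mul, Nat.cast_ofNat, smul_eq_mul,
    map_smul, InnerProductSpace.toDual_apply_apply]
  ring

theorem HasGradientAt.add {f g : E → ℝ} {f' g' x : E}
    (hf : HasGradientAt f f' x) (hg : HasGradientAt g g' x) :
    HasGradientAt (fun y => f y + g y) (f' + g') x := by
  rw [hasGradientAt_iff_hasFDerivAt, map_add]
  exact (hasGradientAt_iff_hasFDerivAt.1 hf).add (hasGradientAt_iff_hasFDerivAt.1 hg)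

end Newton

theorem hasGradientAt_eulerV (a μ1 μ2 : ℝ) {q : R3} (h1 : q ≠ ctr1 a) (h2 : q ≠ ctr2 a) :
    HasGradientAt (eulerV a μ1 μ2)
      ((μ1 / ‖q - ctr1 a‖ ^ 3) • (q - ctr1 a) + (μ2 / ‖q - ctr2 a‖ ^ 3) • (q - ctr2 a)) q := by
  have hV : eulerV a μ1 μ2 = fun x => -μ1 / ‖x - ctr1 a‖ + -μ2 / ‖x - ctr2 a‖ := by
    funext x; simp only [eulerV]; ring
  rw [hV]
  exact (hasGradientAt_neg_div_norm_sub μ1 h1).add (hasGradientAt_neg_div_norm_sub μ2 h2)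

theorem angMom_self (q : R3) : angMom q q = 0 := by
  rw [angMom]; ring

theorem angMom_neg_right (q p : R3) : angMom q (-p) = -angMom q p := by
  simp only [angMom, PiLp.neg_apply]; ring

theorem angMom_gradient_eulerV (a μ1 μ2 : ℝ) {q : R3} (h1 : q ≠ ctr1 a) (h2 : q ≠ ctr2 a) :
    angMom q (gradient (eulerV a μ1 μ2) q) = 0 := by
  rw [(hasGradientAt_eulerV a μ1 μ2 h1 h2).gradient]
  simp only [angMom, ctr1, ctr2, vec3, WithLp.equiv_symm_apply, PiLp.add_apply, PiLp.smul_apply,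
    PiLp.sub_apply, Matrix.cons_val_one, Matrix.cons_val_zero, sub_zero, smul_eq_mul]
  ring

theorem HasDerivAt.angMom {q p : ℝ → R3} {q' p' : R3} {t : ℝ}
    (hq : HasDerivAt q q' t) (hp : HasDerivAt p p' t) :
    HasDerivAt (fun s => angMom (q s) (p s)) (angMom q' (p t) + angMom (q t) p') t := by
  have coord : ∀ {f : ℝ → R3} {f' : R3} (i : Fin 3), HasDerivAt f f' t →
      HasDerivAt (fun s => f s i) (f' i) t :=
    fun i hf => (EuclideanSpace.proj (𝕜 := ℝ) i).hasFDerivAt.comp_hasDerivAt t hf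
  exact (((coord 0 hq).mul (coord 1 hp)).sub ((coord 1 hq).mul (coord 0 hp))).congr_deriv
    (by simp only [_root_.angMom]; ring)

theorem statement0_general (a μ1 μ2 : ℝ) (t₁ t₂ : ℝ) (q p : ℝ → R3)
    (hcent : ∀ t ∈ Set.Ioo t₁ t₂, q t ≠ ctr1 a ∧ q t ≠ ctr2 a)
    (hq : ∀ t ∈ Set.Ioo t₁ t₂, HasDerivAt q (p t) t)
    (hp : ∀ t ∈ Set.Ioo t₁ t₂, HasDerivAt p (-gradient (eulerV a μ1 μ2) (q t)) t) :
    ∀ s ∈ Set.Ioo t₁ t₂, ∀ t ∈ Set.Ioo t₁ t₂,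
      angMom (q s) (p s) = angMom (q t) (p t) := by
  have hL : ∀ t ∈ Set.Ioo t₁ t₂, HasDerivAt (fun s => angMom (q s) (p s)) 0 t := by
    intro t ht
    have h := (hq t ht).angMom (hp t ht)
    rwa [angMom_self, angMom_neg_right, angMom_gradient_eulerV a μ1 μ2 (hcent t ht).1 (hcent t ht).2,
      neg_zero, add_zero] at h
  intro s hs t ht
  exact isOpen_Ioo.is_const_of_deriv_eq_zero isPreconnected_Ioo
    (fun x hx => (hL x hx).differentiableAt.differentiableWithinAt) (fun x hx => (hL x hx).deriv)
    hs ht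

/-- Conservation of the angular momentum `L_z` along solutions of the
Euler two-center problem. -/
theorem statement0 (a μ1 μ2 : ℝ) (ha : 0 < a) (t₁ t₂ : ℝ) (q p : ℝ → R3)
    (hcent : ∀ t ∈ Set.Ioo t₁ t₂, q t ≠ ctr1 a ∧ q t ≠ ctr2 a)
    (hq : ∀ t ∈ Set.Ioo t₁ t₂, HasDerivAt q (p t) t)
    (hp : ∀ t ∈ Set.Ioo t₁ t₂, HasDerivAt p (-gradient (eulerV a μ1 μ2) (q t)) t) :
    ∀ s ∈ Set.Ioo t₁ t₂, ∀ t ∈ Set.Ioo t₁ t₂,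
      angMom (q s) (p s) = angMom (q t) (p t) :=
  statement0_general a μ1 μ2 t₁ t₂ q p hcent hq hp
end
end

section
/- Rotational invariance of the separation constant (equivalent to the vanishing of the Poisson bracket {L_z, G}): for every θ ∈ ℝ, every q ∈ ℝ³ ∖ {o₁, o₂} and every p ∈ ℝ³, one has G(R_θ q, R_θ p) = G(q, p), where R_θ is the rotation of ℝ³ by angle θ about the z-axis. -/
noncomputable section

open Real Filter Topology
open scoped RealInnerProductSpace

/-- Rotation of `R3` by angle `θ` about the `z`-axis. -/
def rotZ (θ : ℝ) (v : R3) : R3 :=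
  vec3 (v 0 * Real.cos θ - v 1 * Real.sin θ) (v 0 * Real.sin θ + v 1 * Real.cos θ) (v 2)

lemma normR3 (v : R3) : ‖v‖ = Real.sqrt (v 0 ^ 2 + v 1 ^ 2 + v 2 ^ 2) := by
  rw [EuclideanSpace.norm_eq]
  simp [Fin.sum_univ_three, sq_abs]

lemma rotsq (θ x y : ℝ) :
    (x * Real.cos θ - y * Real.sin θ) ^ 2 + (x * Real.sin θ + y * Real.cos θ) ^ 2
      = x ^ 2 + y ^ 2 := by
  have h := sin_sq_add_cos_sq θ
  linear_combination (x ^ 2 + y ^ 2) * h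

lemma rotZ_apply0 (θ : ℝ) (v : R3) : rotZ θ v 0 = v 0 * Real.cos θ - v 1 * Real.sin θ := rfl
lemma rotZ_apply1 (θ : ℝ) (v : R3) : rotZ θ v 1 = v 0 * Real.sin θ + v 1 * Real.cos θ := rfl
lemma rotZ_apply2 (θ : ℝ) (v : R3) : rotZ θ v 2 = v 2 := rfl

lemma norm_rotZ (θ : ℝ) (v : R3) : ‖rotZ θ v‖ = ‖v‖ := by
  rw [normR3, normR3, rotZ_apply0, rotZ_apply1, rotZ_apply2, rotsq]

lemma norm_rotZ_sub (θ c : ℝ) (v : R3) :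
    ‖rotZ θ v - vec3 0 0 c‖ = ‖v - vec3 0 0 c‖ := by
  rw [normR3, normR3]
  have h0 : ∀ w : R3, (w - vec3 0 0 c) 0 = w 0 := by
    intro w; simp [PiLp.sub_apply, vec3]
  have h1 : ∀ w : R3, (w - vec3 0 0 c) 1 = w 1 := by
    intro w; simp [PiLp.sub_apply, vec3]
  have h2 : ∀ w : R3, (w - vec3 0 0 c) 2 = w 2 - c := by
    intro w; simp [PiLp.sub_apply, vec3]
  rw [h0, h1, h2, h0, h1, h2, rotZ_apply0, rotZ_apply1, rotZ_apply2, rotsq]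

lemma norm_cross_rotZ (θ : ℝ) (q p : R3) :
    ‖cross3 (rotZ θ q) (rotZ θ p)‖ = ‖cross3 q p‖ := by
  rw [normR3, normR3]
  set c0 := q 1 * p 2 - q 2 * p 1
  set c1 := q 2 * p 0 - q 0 * p 2
  set c2 := q 0 * p 1 - q 1 * p 0
  have e0 : cross3 (rotZ θ q) (rotZ θ p) 0 = c0 * Real.cos θ - c1 * Real.sin θ := by
    show (rotZ θ q) 1 * (rotZ θ p) 2 - (rotZ θ q) 2 * (rotZ θ p) 1
        = c0 * Real.cos θ - c1 * Real.sin θ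
    rw [rotZ_apply1, rotZ_apply2, rotZ_apply2, rotZ_apply1]
    simp only [c0, c1]; ring
  have e1 : cross3 (rotZ θ q) (rotZ θ p) 1 = c0 * Real.sin θ + c1 * Real.cos θ := by
    show (rotZ θ q) 2 * (rotZ θ p) 0 - (rotZ θ q) 0 * (rotZ θ p) 2
        = c0 * Real.sin θ + c1 * Real.cos θ
    rw [rotZ_apply2, rotZ_apply0, rotZ_apply0, rotZ_apply2]
    simp only [c0, c1]; ring
  have e2 : cross3 (rotZ θ q) (rotZ θ p) 2 = c2 := by
    show (rotZ θ q) 0 * (rotZ θ p) 1 - (rotZ θ q) 1 * (rotZ θ p) 0 = c2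
    rw [rotZ_apply0, rotZ_apply1, rotZ_apply1, rotZ_apply0]
    simp only [c2]
    linear_combination (q 0 * p 1 - q 1 * p 0) * sin_sq_add_cos_sq θ
  have h0 : cross3 q p 0 = c0 := rfl
  have h1 : cross3 q p 1 = c1 := rfl
  have h2 : cross3 q p 2 = c2 := rfl
  rw [e0, e1, e2, h0, h1, h2, rotsq]

/-- Rotational invariance of the separation constant `G`. -/
theorem statement2 (a μ1 μ2 : ℝ) (ha : 0 < a) :
    ∀ θ : ℝ, ∀ q : R3, q ≠ ctr1 a → q ≠ ctr2 a → ∀ p : R3,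
      eulerG a μ1 μ2 (rotZ θ q) (rotZ θ p) = eulerG a μ1 μ2 q p := by
  intro θ q _ _ p
  have hc1 : ‖rotZ θ q - ctr1 a‖ = ‖q - ctr1 a‖ := norm_rotZ_sub θ (-a) q
  have hc2 : ‖rotZ θ q - ctr2 a‖ = ‖q - ctr2 a‖ := norm_rotZ_sub θ a q
  have hp : (rotZ θ p 0) ^ 2 + (rotZ θ p 1) ^ 2 = (p 0) ^ 2 + (p 1) ^ 2 := by
    rw [rotZ_apply0, rotZ_apply1, rotsq]
  unfold eulerG eulerH eulerV
  rw [hc1, hc2, norm_rotZ θ p, norm_cross_rotZ θ q p, hp, rotZ_apply2]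
end
end

section
/- Separation of the Euler Hamiltonian in prolate ellipsoidal coordinates: let ξ > 1, η ∈ (−1,1), φ ∈ ℝ and p_ξ, p_η, l ∈ ℝ. If p ∈ ℝ³ satisfies ⟨p, ∂Φ/∂ξ(ξ,η,φ)⟩ = p_ξ, ⟨p, ∂Φ/∂η(ξ,η,φ)⟩ = p_η, and ⟨p, ∂Φ/∂φ(ξ,η,φ)⟩ = l, then L_z(Φ(ξ,η,φ), p) = l and H(Φ(ξ,η,φ), p) = (H_ξ + H_η)/(ξ² − η²). -/
/-!
Write `ρ = √((ξ²−1)(1−η²))` and split `p` into its radial, azimuthal and vertical components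
`P_ρ, P_φ, p_z` with respect to the angle `φ`. Differentiating `Φ` gives
`p_ξ = aξ(1−η²)/ρ · P_ρ + aη p_z`, `p_η = −aη(ξ²−1)/ρ · P_ρ + aξ p_z` and `l = aρ P_φ`, and the
last one is also `L_z`. The cross terms cancel in `(ξ²−1)p_ξ² + (1−η²)p_η² = a²(ξ²−η²)(P_ρ² + p_z²)`,
while `l²(ξ²−η²)/((ξ²−1)(1−η²)) = a²(ξ²−η²)P_φ²`; together with the focal distances
`r₁ = a(ξ+η)`, `r₂ = a(ξ−η)` this turns `(H_ξ + H_η)/(ξ²−η²)` into `‖p‖²/2 + V`.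
-/

noncomputable section

open Real Filter Topology
open scoped RealInnerProductSpace

/-- The prolate ellipsoidal coordinate map
`Φ(ξ,η,φ) = (a√((ξ²−1)(1−η²)) cos φ, a√((ξ²−1)(1−η²)) sin φ, aξη)`. -/
def phiMap (a ξ η φ : ℝ) : R3 :=
  vec3 (a * Real.sqrt ((ξ ^ 2 - 1) * (1 - η ^ 2)) * Real.cos φ)
       (a * Real.sqrt ((ξ ^ 2 - 1) * (1 - η ^ 2)) * Real.sin φ)
       (a * ξ * η)

/-- The `ξ`-part of the separated Hamiltonian:
`H_ξ = (ξ²−1)p_ξ²/(2a²) + l²/(2a²(ξ²−1)) − (μ₁+μ₂)ξ/a`. -/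
def Hxi (a μ1 μ2 ξ pξ l : ℝ) : ℝ :=
  (ξ ^ 2 - 1) * pξ ^ 2 / (2 * a ^ 2) + l ^ 2 / (2 * a ^ 2 * (ξ ^ 2 - 1)) - (μ1 + μ2) * ξ / a

/-- The `η`-part of the separated Hamiltonian:
`H_η = (1−η²)p_η²/(2a²) + l²/(2a²(1−η²)) + (μ₁−μ₂)η/a`. -/
def Heta (a μ1 μ2 η pη l : ℝ) : ℝ :=
  (1 - η ^ 2) * pη ^ 2 / (2 * a ^ 2) + l ^ 2 / (2 * a ^ 2 * (1 - η ^ 2)) + (μ1 - μ2) * η / a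


section Coordinates

@[simp] lemma vec3_zero (x y z : ℝ) : vec3 x y z 0 = x := rfl
@[simp] lemma vec3_one (x y z : ℝ) : vec3 x y z 1 = y := rfl
@[simp] lemma vec3_two (x y z : ℝ) : vec3 x y z 2 = z := rfl

lemma hasDerivAt_vec3 {f g h : ℝ → ℝ} {f' g' h' x : ℝ}
    (hf : HasDerivAt f f' x) (hg : HasDerivAt g g' x) (hh : HasDerivAt h h' x) :
    HasDerivAt (fun t => vec3 (f t) (g t) (h t)) (vec3 f' g' h') x := by
  have hpi : HasDerivAt (fun t => ![f t, g t, h t]) ![f', g', h'] x := by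
    rw [hasDerivAt_pi]; intro i; fin_cases i <;> simpa
  exact (EuclideanSpace.equiv (Fin 3) ℝ).symm.toContinuousLinearMap.hasFDerivAt.comp_hasDerivAt x hpi

lemma inner_vec3 (p : R3) (x y z : ℝ) : ⟪p, vec3 x y z⟫ = p 0 * x + p 1 * y + p 2 * z := by
  simp [vec3, PiLp.inner_apply, Fin.sum_univ_three]; ring

lemma R3.norm_sq_eq (p : R3) : ‖p‖ ^ 2 = p 0 ^ 2 + p 1 ^ 2 + p 2 ^ 2 := by
  simp [EuclideanSpace.norm_sq_eq, Fin.sum_univ_three]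

def radialPart (φ : ℝ) (p : R3) : ℝ := cos φ * p 0 + sin φ * p 1

def azimuthalPart (φ : ℝ) (p : R3) : ℝ := cos φ * p 1 - sin φ * p 0

lemma norm_sq_eq_cylindrical (φ : ℝ) (p : R3) :
    ‖p‖ ^ 2 = radialPart φ p ^ 2 + azimuthalPart φ p ^ 2 + p 2 ^ 2 := by
  rw [R3.norm_sq_eq, radialPart, azimuthalPart]
  linear_combination (-(p 0 ^ 2 + p 1 ^ 2)) * sin_sq_add_cos_sq φ

end Coordinates

section ProlateCoordinates

variable (a : ℝ) {ξ η : ℝ} (φ : ℝ)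

lemma hasDerivAt_phiMap_xi (hX : (ξ ^ 2 - 1) * (1 - η ^ 2) ≠ 0) :
    HasDerivAt (fun s => phiMap a s η φ)
      (vec3 (a * ξ * (1 - η ^ 2) / √((ξ ^ 2 - 1) * (1 - η ^ 2)) * cos φ)
        (a * ξ * (1 - η ^ 2) / √((ξ ^ 2 - 1) * (1 - η ^ 2)) * sin φ) (a * η)) ξ := by
  have hX' : HasDerivAt (fun s : ℝ => (s ^ 2 - 1) * (1 - η ^ 2)) (2 * ξ * (1 - η ^ 2)) ξ := by
    simpa using ((hasDerivAt_pow 2 ξ).sub_const 1).mul_const (1 - η ^ 2)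
  have hsqrt := ((Real.hasDerivAt_sqrt hX).comp ξ hX').const_mul a
  have hcoef : a * (1 / (2 * √((ξ ^ 2 - 1) * (1 - η ^ 2))) * (2 * ξ * (1 - η ^ 2)))
      = a * ξ * (1 - η ^ 2) / √((ξ ^ 2 - 1) * (1 - η ^ 2)) := by
    field_simp
  rw [hcoef] at hsqrt
  exact hasDerivAt_vec3 (hsqrt.mul_const _) (hsqrt.mul_const _)
    (by simpa using ((hasDerivAt_id ξ).const_mul a).mul_const η)

lemma hasDerivAt_phiMap_eta (hX : (ξ ^ 2 - 1) * (1 - η ^ 2) ≠ 0) :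
    HasDerivAt (fun s => phiMap a ξ s φ)
      (vec3 (-(a * η * (ξ ^ 2 - 1)) / √((ξ ^ 2 - 1) * (1 - η ^ 2)) * cos φ)
        (-(a * η * (ξ ^ 2 - 1)) / √((ξ ^ 2 - 1) * (1 - η ^ 2)) * sin φ) (a * ξ)) η := by
  have hX' : HasDerivAt (fun s : ℝ => (ξ ^ 2 - 1) * (1 - s ^ 2)) ((ξ ^ 2 - 1) * -(2 * η)) η := by
    simpa using ((hasDerivAt_pow 2 η).const_sub 1).const_mul (ξ ^ 2 - 1)
  have hsqrt := ((Real.hasDerivAt_sqrt hX).comp η hX').const_mul a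
  have hcoef : a * (1 / (2 * √((ξ ^ 2 - 1) * (1 - η ^ 2))) * ((ξ ^ 2 - 1) * -(2 * η)))
      = -(a * η * (ξ ^ 2 - 1)) / √((ξ ^ 2 - 1) * (1 - η ^ 2)) := by
    field_simp
  rw [hcoef] at hsqrt
  exact hasDerivAt_vec3 (hsqrt.mul_const _) (hsqrt.mul_const _)
    (by simpa using (hasDerivAt_id η).const_mul (a * ξ))

lemma hasDerivAt_phiMap_phi :
    HasDerivAt (fun s => phiMap a ξ η s)
      (vec3 (a * √((ξ ^ 2 - 1) * (1 - η ^ 2)) * -sin φ)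
        (a * √((ξ ^ 2 - 1) * (1 - η ^ 2)) * cos φ) 0) φ :=
  hasDerivAt_vec3 ((hasDerivAt_cos φ).const_mul _) ((hasDerivAt_sin φ).const_mul _)
    (hasDerivAt_const φ _)

variable (p : R3)

lemma inner_deriv_phiMap_xi (hX : (ξ ^ 2 - 1) * (1 - η ^ 2) ≠ 0) :
    ⟪p, deriv (fun s => phiMap a s η φ) ξ⟫
      = a * ξ * (1 - η ^ 2) / √((ξ ^ 2 - 1) * (1 - η ^ 2)) * radialPart φ p + a * η * p 2 := by
  rw [(hasDerivAt_phiMap_xi a φ hX).deriv, inner_vec3, radialPart]; ring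

lemma inner_deriv_phiMap_eta (hX : (ξ ^ 2 - 1) * (1 - η ^ 2) ≠ 0) :
    ⟪p, deriv (fun s => phiMap a ξ s φ) η⟫
      = -(a * η * (ξ ^ 2 - 1)) / √((ξ ^ 2 - 1) * (1 - η ^ 2)) * radialPart φ p
        + a * ξ * p 2 := by
  rw [(hasDerivAt_phiMap_eta a φ hX).deriv, inner_vec3, radialPart]; ring

lemma inner_deriv_phiMap_phi :
    ⟪p, deriv (fun s => phiMap a ξ η s) φ⟫
      = a * √((ξ ^ 2 - 1) * (1 - η ^ 2)) * azimuthalPart φ p := by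
  rw [(hasDerivAt_phiMap_phi a φ).deriv, inner_vec3, azimuthalPart]; ring

lemma angMom_phiMap :
    angMom (phiMap a ξ η φ) p = a * √((ξ ^ 2 - 1) * (1 - η ^ 2)) * azimuthalPart φ p := by
  simp only [angMom, phiMap, vec3_zero, vec3_one, azimuthalPart]; ring

lemma norm_phiMap_sub_focus {c : ℝ} (hc : c ^ 2 = 1) (hX : 0 ≤ (ξ ^ 2 - 1) * (1 - η ^ 2)) :
    ‖phiMap a ξ η φ - vec3 0 0 (c * a)‖ = |a * (ξ - c * η)| := by
  rw [← sqrt_sq (norm_nonneg _), ← sqrt_sq_eq_abs, R3.norm_sq_eq]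
  congr 1
  simp only [phiMap, PiLp.sub_apply, vec3_zero, vec3_one, vec3_two]
  linear_combination (a ^ 2 * cos φ ^ 2 + a ^ 2 * sin φ ^ 2) * sq_sqrt hX
    + a ^ 2 * (ξ ^ 2 - 1) * (1 - η ^ 2) * sin_sq_add_cos_sq φ + a ^ 2 * (1 - η ^ 2) * hc

end ProlateCoordinates

lemma kinetic_separation {a ξ η u R Z : ℝ} (hu : u ^ 2 = (ξ ^ 2 - 1) * (1 - η ^ 2)) (hu0 : u ≠ 0) :
    (ξ ^ 2 - 1) * (a * ξ * (1 - η ^ 2) / u * R + a * η * Z) ^ 2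
      + (1 - η ^ 2) * (-(a * η * (ξ ^ 2 - 1)) / u * R + a * ξ * Z) ^ 2
      = a ^ 2 * (ξ ^ 2 - η ^ 2) * (R ^ 2 + Z ^ 2) := by
  field_simp
  linear_combination (a ^ 2 * R ^ 2 * (η ^ 2 - ξ ^ 2)) * hu

lemma Hxi_add_Heta (a μ1 μ2 ξ η pξ pη l : ℝ) (ha : a ≠ 0) (hξ : ξ ^ 2 - 1 ≠ 0) (hη : 1 - η ^ 2 ≠ 0) :
    Hxi a μ1 μ2 ξ pξ l + Heta a μ1 μ2 η pη l
      = ((ξ ^ 2 - 1) * pξ ^ 2 + (1 - η ^ 2) * pη ^ 2) / (2 * a ^ 2)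
        + (ξ ^ 2 - η ^ 2) * l ^ 2 / (2 * a ^ 2 * ((ξ ^ 2 - 1) * (1 - η ^ 2)))
        - (μ1 * (ξ - η) + μ2 * (ξ + η)) / a := by
  rw [Hxi, Heta]
  field_simp
  ring

/-- Separation of the Euler Hamiltonian in prolate ellipsoidal coordinates:
if `⟨p, ∂Φ/∂ξ⟩ = p_ξ`, `⟨p, ∂Φ/∂η⟩ = p_η` and `⟨p, ∂Φ/∂φ⟩ = l`, then
`L_z(Φ, p) = l` and `H(Φ, p) = (H_ξ + H_η)/(ξ² − η²)`. -/
theorem statement5 (a μ1 μ2 : ℝ) (ha : 0 < a) (ξ η φ pξ pη l : ℝ)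
    (hξ : 1 < ξ) (hη : η ∈ Set.Ioo (-1 : ℝ) 1) (p : R3)
    (h1 : ⟪p, deriv (fun s => phiMap a s η φ) ξ⟫ = pξ)
    (h2 : ⟪p, deriv (fun s => phiMap a ξ s φ) η⟫ = pη)
    (h3 : ⟪p, deriv (fun s => phiMap a ξ η s) φ⟫ = l) :
    angMom (phiMap a ξ η φ) p = l ∧
    eulerH a μ1 μ2 (phiMap a ξ η φ) p =
      (Hxi a μ1 μ2 ξ pξ l + Heta a μ1 μ2 η pη l) / (ξ ^ 2 - η ^ 2) := by
  obtain ⟨hη1, hη2⟩ := hη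
  have hξsq : 0 < ξ ^ 2 - 1 := by nlinarith
  have hηsq : 0 < 1 - η ^ 2 := by nlinarith
  have hX : 0 < (ξ ^ 2 - 1) * (1 - η ^ 2) := mul_pos hξsq hηsq
  rw [inner_deriv_phiMap_xi a φ p hX.ne'] at h1
  rw [inner_deriv_phiMap_eta a φ p hX.ne'] at h2
  rw [inner_deriv_phiMap_phi] at h3
  subst h1 h2 h3
  refine ⟨angMom_phiMap a φ p, ?_⟩
  have hr1 : ‖phiMap a ξ η φ - ctr1 a‖ = a * (ξ + η) := by
    simpa [ctr1, abs_of_pos (by nlinarith : 0 < a * (ξ + η))]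
      using norm_phiMap_sub_focus a φ (c := -1) (by norm_num) hX.le
  have hr2 : ‖phiMap a ξ η φ - ctr2 a‖ = a * (ξ - η) := by
    simpa [ctr2, abs_of_pos (by nlinarith : 0 < a * (ξ - η))]
      using norm_phiMap_sub_focus a φ (c := 1) (by norm_num) hX.le
  have hkin := kinetic_separation (a := a) (R := radialPart φ p) (Z := p 2)
    (sq_sqrt hX.le) (sqrt_pos.mpr hX).ne'
  rw [eulerH, eulerV, hr1, hr2, norm_sq_eq_cylindrical φ,
    Hxi_add_Heta a μ1 μ2 ξ η _ _ _ ha.ne' hξsq.ne' hηsq.ne', hkin, mul_pow, mul_pow, sq_sqrt hX.le]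
  have hsum : ξ + η ≠ 0 := by linarith
  have hdiff : ξ - η ≠ 0 := by linarith
  have hfoci : ξ ^ 2 - η ^ 2 ≠ 0 := by nlinarith
  field_simp
  ring
end
end

section
/- Parametrization of the ξ-family of critical values of the spatial Euler problem (with a = 1): fix h, g, l ∈ ℝ and ξ₀ > 1, write μ = μ₁ + μ₂, and define R(ξ) = (ξ² − 1)(2hξ² + 2μξ − 2g) − l². Then R(ξ₀) = 0 and R'(ξ₀) = 0 if and only if g = h(2ξ₀² − 1) + μ(3ξ₀² − 1)/(2ξ₀) and l² = −(μ + 2hξ₀)(ξ₀² − 1)²/ξ₀. -/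
/-!
`R = P · Q − l²` with `P = ξ² − 1` and `Q = 2hξ² + 2μξ − 2g`. At a point where `P' = 2ξ₀ ≠ 0`,
the condition `R' = P'Q + PQ' = 0` is linear in `Q`, hence in `g`, and fixes `Q = −PQ'/P'`;
substituting it into `R = 0` gives `l² = PQ = −P²Q'/P'`.
-/

theorem mul_sub_eq_zero_and_deriv_eq_zero_iff {K : Type*} [Field K] {p p' q q' d : K}
    (hp' : p' ≠ 0) :
    (p * q - d = 0 ∧ p' * q + p * q' = 0) ↔ (q = -p * q' / p' ∧ d = -p ^ 2 * q' / p') := by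
  constructor
  · rintro ⟨hd, hq⟩
    have hq' : q = -p * q' / p' := by
      rw [eq_div_iff hp']
      linear_combination hq
    refine ⟨hq', ?_⟩
    rw [← sub_eq_zero.mp hd, hq']
    ring
  · rintro ⟨hq, hd⟩
    subst hq hd
    constructor
    · ring
    · field_simp
      ring

theorem hasDerivAt_sq_sub_one_mul_quadratic (a b c d x : ℝ) :
    HasDerivAt (fun ξ : ℝ => (ξ ^ 2 - 1) * (a * ξ ^ 2 + b * ξ - c) - d)
      (2 * x * (a * x ^ 2 + b * x - c) + (x ^ 2 - 1) * (2 * a * x + b)) x := by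
  have hP : HasDerivAt (fun ξ : ℝ => ξ ^ 2 - 1) (2 * x) x := by
    simpa using (hasDerivAt_pow 2 x).sub_const 1
  have hQ : HasDerivAt (fun ξ : ℝ => a * ξ ^ 2 + b * ξ - c) (2 * a * x + b) x :=
    ((((hasDerivAt_pow 2 x).const_mul a).add ((hasDerivAt_id' x).const_mul b)).sub_const c
      ).congr_deriv (by norm_num; ring)
  exact (hP.mul hQ).sub_const d

/-- Parametrization of the `ξ`-family of critical values of the spatial
Euler problem (`a = 1`, `μ = μ₁ + μ₂`): for `ξ₀ > 1` and
`R(ξ) = (ξ²−1)(2hξ² + 2μξ − 2g) − l²`, one has `R(ξ₀) = 0 ∧ R'(ξ₀) = 0` iff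
`g = h(2ξ₀²−1) + μ(3ξ₀²−1)/(2ξ₀)` and `l² = −(μ + 2hξ₀)(ξ₀²−1)²/ξ₀`. -/
theorem statement9 (μ1 μ2 h g l ξ0 : ℝ) (hξ : 1 < ξ0) :
    ((ξ0 ^ 2 - 1) * (2 * h * ξ0 ^ 2 + 2 * (μ1 + μ2) * ξ0 - 2 * g) - l ^ 2 = 0 ∧
      deriv (fun ξ : ℝ =>
        (ξ ^ 2 - 1) * (2 * h * ξ ^ 2 + 2 * (μ1 + μ2) * ξ - 2 * g) - l ^ 2) ξ0 = 0) ↔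
    (g = h * (2 * ξ0 ^ 2 - 1) + (μ1 + μ2) * (3 * ξ0 ^ 2 - 1) / (2 * ξ0) ∧
      l ^ 2 = -((μ1 + μ2) + 2 * h * ξ0) * (ξ0 ^ 2 - 1) ^ 2 / ξ0) := by
  have hξ0 : ξ0 ≠ 0 := (zero_lt_one.trans hξ).ne'
  rw [(hasDerivAt_sq_sub_one_mul_quadratic _ _ _ _ ξ0).deriv,
    mul_sub_eq_zero_and_deriv_eq_zero_iff (mul_ne_zero two_ne_zero hξ0)]
  refine and_congr ⟨fun hq => ?_, fun hg => ?_⟩ ?_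
  · field_simp at hq ⊢
    linear_combination -hq
  · subst hg
    field_simp
    ring
  · constructor <;> intro hl <;> rw [hl] <;> field_simp <;> ring
end

section
/- Parametrization of the η-family of critical values of the spatial Euler problem (with a = 1): fix h, g, l ∈ ℝ and η₀ ∈ (−1,1) with η₀ ≠ 0, write δ = μ₁ − μ₂, and define R(η) = (1 − η²)(−2hη² − 2δη + 2g) − l². Then R(η₀) = 0 and R'(η₀) = 0 if and only if g = h(2η₀² − 1) + δ(3η₀² − 1)/(2η₀) and l² = −(δ + 2hη₀)(η₀² − 1)²/η₀. -/
/-- Parametrization of the `η`-family of critical values of the spatial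
Euler problem (`a = 1`, `δ = μ₁ − μ₂`): for `η₀ ∈ (−1,1)`, `η₀ ≠ 0`, and
`R(η) = (1−η²)(−2hη² − 2δη + 2g) − l²`, one has `R(η₀) = 0 ∧ R'(η₀) = 0` iff
`g = h(2η₀²−1) + δ(3η₀²−1)/(2η₀)` and `l² = −(δ + 2hη₀)(η₀²−1)²/η₀`. -/
theorem statement10 (μ1 μ2 h g l η0 : ℝ) (hη : -1 < η0) (hη' : η0 < 1) (hη0 : η0 ≠ 0) :
    ((1 - η0 ^ 2) * (-2 * h * η0 ^ 2 - 2 * (μ1 - μ2) * η0 + 2 * g) - l ^ 2 = 0 ∧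
      deriv (fun η : ℝ =>
        (1 - η ^ 2) * (-2 * h * η ^ 2 - 2 * (μ1 - μ2) * η + 2 * g) - l ^ 2) η0 = 0) ↔
    (g = h * (2 * η0 ^ 2 - 1) + (μ1 - μ2) * (3 * η0 ^ 2 - 1) / (2 * η0) ∧
      l ^ 2 = -((μ1 - μ2) + 2 * h * η0) * (η0 ^ 2 - 1) ^ 2 / η0) := by
  have hd : deriv (fun η : ℝ =>
      (1 - η ^ 2) * (-2 * h * η ^ 2 - 2 * (μ1 - μ2) * η + 2 * g) - l ^ 2) η0
      = (-2 * η0) * (-2 * h * η0 ^ 2 - 2 * (μ1 - μ2) * η0 + 2 * g)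
        + (1 - η0 ^ 2) * (-2 * h * (2 * η0) - 2 * (μ1 - μ2)) := by
    have h1 : HasDerivAt (fun η : ℝ => (1 - η ^ 2)) (-2 * η0) η0 := by
      simpa using ((hasDerivAt_pow 2 η0).const_sub 1)
    have h2 : HasDerivAt (fun η : ℝ => -2 * h * η ^ 2 - 2 * (μ1 - μ2) * η + 2 * g)
        (-2 * h * (2 * η0) - 2 * (μ1 - μ2)) η0 := by
      have := (((hasDerivAt_pow 2 η0).const_mul (-2 * h)).sub
        ((hasDerivAt_id η0).const_mul (2 * (μ1 - μ2)))).add_const (2 * g)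
      simpa using this
    have := ((h1.mul h2).sub_const (l ^ 2))
    exact this.deriv.trans (by ring)
  rw [hd]
  constructor
  · rintro ⟨e1, e2⟩
    have hg : g = h * (2 * η0 ^ 2 - 1) + (μ1 - μ2) * (3 * η0 ^ 2 - 1) / (2 * η0) := by
      field_simp
      linear_combination -e2/2
    refine ⟨hg, ?_⟩
    field_simp
    nlinarith [e1, e2]
  · rintro ⟨hg, hl⟩
    constructor
    · rw [hg, hl]; field_simp; ring
    · rw [hg]; field_simp; ring
end

section
/- Asymptotic compatibility of the Euler integrals with the Kepler reference at o₁: for every fixed p ∈ ℝ³, the function q ↦ G(q,p) − G_{r₁}(q,p) (which equals μ₂[(a(z+a) − 1)/r₁(q) − (a(z−a) + 1)/r₂(q)] and is independent of p) tends to 0 as ‖q‖ → ∞ with q ∈ ℝ³ ∖ {o₁, o₂}. -/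
/-!
Because the Kepler reference has mass `μ₁ - μ₂` at `o₁`, the difference `G - G_{r₁}` only
involves `μ₂` and the positions: it is `μ₂ (a (u₁ - u₂)_z - 1/r₁ - 1/r₂)`, where `uᵢ` is the unit
vector from `oᵢ` to `q`. Far away, `1/rᵢ → 0`, and the two unit vectors approach each other since
`‖x/‖x‖ - y/‖y‖‖ ≤ 2 ‖x - y‖ / ‖x‖` with `x - y = o₂ - o₁` fixed.
-/

noncomputable section

open Real Filter Topology
open scoped RealInnerProductSpace

/-- The reference Kepler potential at `o₁`: `V_{r₁}(q) = -(μ₁-μ₂)/r₁(q)`. -/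
def kepV1 (a μ1 μ2 : ℝ) (q : R3) : ℝ := -(μ1 - μ2) / ‖q - ctr1 a‖

/-- The reference Kepler Hamiltonian at `o₁`. -/
def kepH1 (a μ1 μ2 : ℝ) (q p : R3) : ℝ := ‖p‖ ^ 2 / 2 + kepV1 a μ1 μ2 q

/-- The separation constant of the reference Kepler system at `o₁`. -/
def kepG1 (a μ1 μ2 : ℝ) (q p : R3) : ℝ :=
  kepH1 a μ1 μ2 q p + (‖cross3 q p‖ ^ 2 - a ^ 2 * ((p 0) ^ 2 + (p 1) ^ 2)) / 2
    + a * (q 2 + a) * (μ1 - μ2) / ‖q - ctr1 a‖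

open Bornology

section UnitVectors

variable {V : Type*} [NormedAddCommGroup V]

lemma tendsto_inv_norm_sub_cobounded (c : V) :
    Tendsto (fun q : V => ‖q - c‖⁻¹) (cobounded V) (𝓝 0) :=
  tendsto_inv_atTop_zero.comp (tendsto_norm_cobounded_atTop.comp (tendsto_sub_const_cobounded c))

lemma norm_normalize_sub_normalize_le [NormedSpace ℝ V] {x : V} (hx : x ≠ 0) (y : V) :
    ‖NormedSpace.normalize x - NormedSpace.normalize y‖ ≤ 2 * ‖x - y‖ / ‖x‖ := by
  have hx' : 0 < ‖x‖ := norm_pos_iff.2 hx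
  have hsplit : NormedSpace.normalize x - NormedSpace.normalize y =
      ‖x‖⁻¹ • (x - y) + (‖x‖⁻¹ - ‖y‖⁻¹) • y := by
    simp only [NormedSpace.normalize, smul_sub, sub_smul]; abel
  have hrescale : ‖(‖x‖⁻¹ - ‖y‖⁻¹) • y‖ ≤ ‖x - y‖ / ‖x‖ := by
    rcases eq_or_ne y 0 with rfl | hy
    · simp only [smul_zero, norm_zero]; positivity
    have hy' : 0 < ‖y‖ := norm_pos_iff.2 hy
    rw [norm_smul, Real.norm_eq_abs, inv_sub_inv hx'.ne' hy'.ne', abs_div,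
      abs_of_pos (mul_pos hx' hy'), div_mul_eq_mul_div, mul_div_mul_right _ _ hy'.ne']
    gcongr
    exact abs_norm_sub_norm_le y x |>.trans_eq (norm_sub_rev y x)
  calc ‖NormedSpace.normalize x - NormedSpace.normalize y‖
      ≤ ‖‖x‖⁻¹ • (x - y)‖ + ‖(‖x‖⁻¹ - ‖y‖⁻¹) • y‖ := hsplit ▸ norm_add_le _ _
    _ ≤ ‖x - y‖ / ‖x‖ + ‖x - y‖ / ‖x‖ := by
      rw [norm_smul, norm_inv, norm_norm, inv_mul_eq_div]
      exact add_le_add_right hrescale _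
    _ = 2 * ‖x - y‖ / ‖x‖ := by ring

lemma tendsto_normalize_sub_sub_normalize_sub [NormedSpace ℝ V] (c d : V) :
    Tendsto (fun q : V => NormedSpace.normalize (q - c) - NormedSpace.normalize (q - d))
      (cobounded V) (𝓝 0) := by
  have hbound : Tendsto (fun q : V => 2 * ‖d - c‖ * ‖q - c‖⁻¹) (cobounded V) (𝓝 0) := by
    simpa using (tendsto_inv_norm_sub_cobounded c).const_mul (2 * ‖d - c‖)
  refine squeeze_zero_norm' ?_ hbound
  filter_upwards [(tendsto_sub_const_cobounded c).eventually_ne_cobounded 0] with q hq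
  simpa [div_eq_mul_inv, sub_sub_sub_cancel_left] using norm_normalize_sub_normalize_le hq (q - d)

end UnitVectors

lemma sub_ctr1_apply_two (a : ℝ) (q : R3) : (q - ctr1 a) 2 = q 2 + a := by
  simp [ctr1, vec3]

lemma sub_ctr2_apply_two (a : ℝ) (q : R3) : (q - ctr2 a) 2 = q 2 - a := by
  simp [ctr2, vec3]

lemma eulerG_sub_kepG1 (a μ1 μ2 : ℝ) (q p : R3) :
    eulerG a μ1 μ2 q p - kepG1 a μ1 μ2 q p =
      μ2 * ((a * (q 2 + a) - 1) / ‖q - ctr1 a‖ - (a * (q 2 - a) + 1) / ‖q - ctr2 a‖) := by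
  simp only [eulerG, kepG1, eulerH, kepH1, eulerV, kepV1, div_eq_mul_inv]
  ring

lemma eulerG_sub_kepG1_eq_normalize (a μ1 μ2 : ℝ) (q p : R3) :
    eulerG a μ1 μ2 q p - kepG1 a μ1 μ2 q p =
      μ2 * (a * (NormedSpace.normalize (q - ctr1 a) - NormedSpace.normalize (q - ctr2 a)) 2
        - ‖q - ctr1 a‖⁻¹ - ‖q - ctr2 a‖⁻¹) := by
  rw [eulerG_sub_kepG1, PiLp.sub_apply, NormedSpace.normalize, NormedSpace.normalize,
    PiLp.smul_apply, PiLp.smul_apply, sub_ctr1_apply_two, sub_ctr2_apply_two, smul_eq_mul,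
    smul_eq_mul]
  ring

theorem statement14_general (a μ1 μ2 : ℝ) :
    (∀ q : R3, q ≠ ctr1 a → q ≠ ctr2 a → ∀ p : R3,
      eulerG a μ1 μ2 q p - kepG1 a μ1 μ2 q p =
        μ2 * ((a * (q 2 + a) - 1) / ‖q - ctr1 a‖ - (a * (q 2 - a) + 1) / ‖q - ctr2 a‖)) ∧
    ∀ p : R3,
      Tendsto (fun q : R3 => eulerG a μ1 μ2 q p - kepG1 a μ1 μ2 q p)
        (comap (fun q : R3 => ‖q‖) atTop ⊓ 𝓟 {q : R3 | q ≠ ctr1 a ∧ q ≠ ctr2 a})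
        (𝓝 0) := by
  refine ⟨fun q _ _ p => eulerG_sub_kepG1 a μ1 μ2 q p, fun p => ?_⟩
  refine Tendsto.mono_left ?_ (inf_le_left.trans_eq comap_norm_atTop)
  simp_rw [eulerG_sub_kepG1_eq_normalize]
  have hz := ((EuclideanSpace.proj (2 : Fin 3)).continuous.tendsto 0).comp
    (tendsto_normalize_sub_sub_normalize_sub (ctr1 a) (ctr2 a))
  simpa using ((hz.const_mul a).sub (tendsto_inv_norm_sub_cobounded (ctr1 a))).sub
    (tendsto_inv_norm_sub_cobounded (ctr2 a)) |>.const_mul μ2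

/-- Asymptotic compatibility of the Euler integrals with the Kepler
reference at `o₁`: `G − G_{r₁} = μ₂[(a(z+a)−1)/r₁ − (a(z−a)+1)/r₂]` (independent of `p`)
and it tends to `0` as `‖q‖ → ∞` with `q ∈ ℝ³ ∖ {o₁,o₂}`. -/
theorem statement14 (a μ1 μ2 : ℝ) (ha : 0 < a) :
    (∀ q : R3, q ≠ ctr1 a → q ≠ ctr2 a → ∀ p : R3,
      eulerG a μ1 μ2 q p - kepG1 a μ1 μ2 q p =
        μ2 * ((a * (q 2 + a) - 1) / ‖q - ctr1 a‖ - (a * (q 2 - a) + 1) / ‖q - ctr2 a‖)) ∧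
    ∀ p : R3,
      Tendsto (fun q : R3 => eulerG a μ1 μ2 q p - kepG1 a μ1 μ2 q p)
        (comap (fun q : R3 => ‖q‖) atTop ⊓ 𝓟 {q : R3 | q ≠ ctr1 a ∧ q ≠ ctr2 a})
        (𝓝 0) :=
  statement14_general a μ1 μ2
end
end
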